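/- Let H be a finite set and s : X^n × H → ℝ with sensitivity Δ. Let OPT(X) = max_h s(X,h). For any t > 0, the exponential mechanism outputs an h with s(X,h) < OPT(X) − (2Δ/ε)(ln|H| + t) with probability at most exp(−t). -/

import Mathlib

open scoped Classical

/-- Output probability of the exponential mechanism with score s, sensitivity
parameter Δ and privacy parameter ε, on dataset X, at object h. -/
noncomputable def expMechProb {𝒳 H : Type*} [Fintype H] {n : ℕ}
    (s : (Fin n → 𝒳) → H → ℝ) (Δ ε : ℝ) (X : Fin n → 𝒳) (h : H) : ℝ :=
  Real.exp (ε * s X h / (2 * Δ)) / ∑ h' : H, Real.exp (ε * s X h' / (2 * Δ))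

/-!
The exponential mechanism is the Gibbs distribution `exp (β s) / Z` with `β = ε / (2Δ)`.
The partition function `Z` is at least the weight `exp (β OPT)` of a maximiser, while each
of the at most `|H|` bad outcomes has weight below `exp (β (OPT - c))`; so the bad outcomes
have total probability at most `|H| exp (-β c)`, which equals `exp (-t)` for
`c = (ln |H| + t) / β`.
-/

open Finset Real

section Gibbs

variable {H : Type*} [Fintype H]

theorem exp_mul_iSup_le_sum_exp [Nonempty H] (f : H → ℝ) {β : ℝ} (hβ : 0 ≤ β) :
    exp (β * ⨆ h, f h) ≤ ∑ h, exp (β * f h) := by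
  obtain ⟨h₀, hh₀⟩ := Finite.exists_max f
  calc exp (β * ⨆ h, f h) ≤ exp (β * f h₀) := by gcongr; exact ciSup_le hh₀
    _ ≤ ∑ h, exp (β * f h) :=
        single_le_sum (f := fun h => exp (β * f h)) (fun h _ => (exp_pos _).le) (mem_univ h₀)

theorem sum_filter_lt_gibbs_le [Nonempty H] (f : H → ℝ) {β : ℝ} (hβ : 0 ≤ β) (a : ℝ) :
    ∑ h ∈ univ.filter (fun h => f h < a), exp (β * f h) / ∑ h', exp (β * f h') ≤
      Fintype.card H * exp (β * (a - ⨆ h, f h)) := by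
  have hZ := exp_mul_iSup_le_sum_exp f hβ
  calc ∑ h ∈ univ.filter (fun h => f h < a), exp (β * f h) / ∑ h', exp (β * f h')
      ≤ ∑ _h ∈ univ.filter (fun h => f h < a), exp (β * a) / exp (β * ⨆ h, f h) := by
        refine sum_le_sum fun h hh => div_le_div₀ (exp_pos _).le ?_ (exp_pos _) hZ
        gcongr
        exact (mem_filter.1 hh).2.le
    _ ≤ Fintype.card H * (exp (β * a) / exp (β * ⨆ h, f h)) := by
        rw [sum_const, nsmul_eq_mul]
        gcongr
        exact_mod_cast card_filter_le _ _
    _ = Fintype.card H * exp (β * (a - ⨆ h, f h)) := by rw [← exp_sub, mul_sub]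

end Gibbs

theorem mul_exp_neg_log_add {x : ℝ} (hx : 0 < x) (t : ℝ) : x * exp (-(log x + t)) = exp (-t) := by
  rw [neg_add, exp_add, exp_neg, exp_log hx, ← mul_assoc, mul_inv_cancel₀ hx.ne', one_mul]

theorem exponential_mechanism_utility_general
    {𝒳 H : Type*} [Fintype H] [Nonempty H] (n : ℕ)
    (s : (Fin n → 𝒳) → H → ℝ) (Δ ε : ℝ) (hΔ : 0 < Δ) (hε : 0 < ε)
    (X : Fin n → 𝒳) (t : ℝ) :
    ∑ h ∈ Finset.univ.filter (fun h : H =>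
        s X h < (⨆ h' : H, s X h') - (2 * Δ / ε) * (Real.log (Fintype.card H) + t)),
      expMechProb s Δ ε X h ≤ Real.exp (-t) := by
  have hβ : 0 < ε / (2 * Δ) := by positivity
  have hprob : expMechProb s Δ ε X = fun h => exp (ε / (2 * Δ) * s X h) /
      ∑ h', exp (ε / (2 * Δ) * s X h') := by
    funext h
    simp only [expMechProb, mul_div_right_comm]
  have hexp : ε / (2 * Δ) * ((⨆ h', s X h') - 2 * Δ / ε * (log (Fintype.card H) + t)
      - ⨆ h', s X h') = -(log (Fintype.card H) + t) := by
    field_simp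
    ring
  have tail := sum_filter_lt_gibbs_le (s X) hβ.le
    ((⨆ h' : H, s X h') - (2 * Δ / ε) * (log (Fintype.card H) + t))
  rwa [hexp, mul_exp_neg_log_add (by exact_mod_cast Fintype.card_pos) t, ← hprob] at tail

/-- utility of the exponential mechanism: the probability that the
output has score below OPT − (2Δ/ε)(ln|H| + t) is at most exp(−t). -/
theorem exponential_mechanism_utility
    {𝒳 H : Type*} [Fintype H] [Nonempty H] (n : ℕ)
    (s : (Fin n → 𝒳) → H → ℝ) (Δ ε : ℝ) (hΔ : 0 < Δ) (hε : 0 < ε)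
    (X : Fin n → 𝒳) (t : ℝ) (ht : 0 < t) :
    ∑ h ∈ Finset.univ.filter (fun h : H =>
        s X h < (⨆ h' : H, s X h') - (2 * Δ / ε) * (Real.log (Fintype.card H) + t)),
      expMechProb s Δ ε X h ≤ Real.exp (-t) :=
  exponential_mechanism_utility_general n s Δ ε hΔ hε X t
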